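/- arXiv:0906.2924 — 5 statements merged into one kernel-verified Lean document; each statement's English description precedes it below -/
import Mathlib

section
/- Let d ≥ 3 and let 𝔑 ⊆ ℝ^{2d-2} be the image of Φ : ℝ × S^{d-2} → ℝ^{2d-2}, Φ(λ,n) = ((1−λ)n, λn). Then 𝔑 is nowhere locally contained in a hyperplane: for every point p ∈ 𝔑, every open neighborhood U of p in ℝ^{2d-2}, and every affine hyperplane A ⊆ ℝ^{2d-2}, the set 𝔑 ∩ U is not contained in A. -/
open Metric Real

lemma key_lemma (m : ℕ) (hm : 2 ≤ m) (n₀ : EuclideanSpace ℝ (Fin m)) (hn₀ : ‖n₀‖ = 1)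
    (V : Set (EuclideanSpace ℝ (Fin m))) (hV : IsOpen V) (hn₀V : n₀ ∈ V)
    (v : EuclideanSpace ℝ (Fin m)) (t : ℝ)
    (h : ∀ n, ‖n‖ = 1 → n ∈ V → (inner ℝ v n : ℝ) = t) : v = 0 ∧ t = 0 := by
  have ht : (inner ℝ v n₀ : ℝ) = t := h n₀ hn₀ hn₀V
  -- claim : every unit w orthogonal to n₀ has inner v w = 0, and t = 0
  have claim : ∀ w : EuclideanSpace ℝ (Fin m), ‖w‖ = 1 → (inner ℝ n₀ w : ℝ) = 0 →
      (inner ℝ v w : ℝ) = 0 ∧ t = 0 := by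
    intro w hw hnw
    set f : ℝ → EuclideanSpace ℝ (Fin m) := fun θ => Real.cos θ • n₀ + Real.sin θ • w with hf
    have hnorm : ∀ θ, ‖f θ‖ = 1 := by
      intro θ
      have h1 : ‖f θ‖ ^ 2 = 1 := by
        rw [hf]
        rw [norm_add_sq_real]
        rw [norm_smul, norm_smul, real_inner_smul_left, real_inner_smul_right, hnw]
        simp [hn₀, hw, abs_mul_abs_self]
        try rw [sq_abs, sq_abs]
        try rw [Real.cos_sq_add_sin_sq]
        try ring_nf
        try rw [Real.sin_sq_add_cos_sq]
      nlinarith [norm_nonneg (f θ)]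
    have hcont : Continuous f := by
      fun_prop
    have hf0 : f 0 = n₀ := by simp [hf]
    have hev : ∀ᶠ θ in nhds (0:ℝ), f θ ∈ V ∧ f (-θ) ∈ V := by
      have h1 : ∀ᶠ θ in nhds (0:ℝ), f θ ∈ V :=
        (hcont.continuousAt (x := 0)).preimage_mem_nhds (hf0 ▸ hV.mem_nhds hn₀V)
      have h2 : ∀ᶠ θ in nhds (0:ℝ), f (-θ) ∈ V := by
        have : Continuous (fun θ : ℝ => f (-θ)) := hcont.comp continuous_neg
        have := (this.continuousAt (x := 0)).preimage_mem_nhds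
          (by simpa [hf0] using hV.mem_nhds hn₀V)
        exact this
      exact h1.and h2
    obtain ⟨δ, hδ, hball⟩ := Metric.eventually_nhds_iff_ball.mp hev
    set θ := min (δ/2) 1 with hθdef
    have hθpos : 0 < θ := by positivity
    have hθlt : θ < δ := by
      rcases min_le_left (δ/2) 1 with h
      calc θ ≤ δ/2 := min_le_left _ _
        _ < δ := by linarith
    have hθle : θ ≤ 1 := min_le_right _ _
    have hmem : f θ ∈ V ∧ f (-θ) ∈ V := hball θ (by simp [abs_of_pos hθpos, hθlt])
    have hsin : Real.sin θ ≠ 0 :=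
      ne_of_gt (Real.sin_pos_of_pos_of_lt_pi hθpos (lt_of_le_of_lt hθle (by linarith [Real.pi_gt_three])))
    have hinner : ∀ ψ : ℝ, (inner ℝ v (f ψ) : ℝ) = Real.cos ψ * (inner ℝ v n₀ : ℝ) + Real.sin ψ * (inner ℝ v w : ℝ) := by
      intro ψ
      rw [hf]
      rw [inner_add_right, real_inner_smul_right, real_inner_smul_right]
    have e1 : Real.cos θ * (inner ℝ v n₀ : ℝ) + Real.sin θ * (inner ℝ v w : ℝ) = t := by
      rw [← hinner]; exact h _ (hnorm θ) hmem.1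
    have e2 : Real.cos θ * (inner ℝ v n₀ : ℝ) - Real.sin θ * (inner ℝ v w : ℝ) = t := by
      have := h _ (hnorm (-θ)) hmem.2
      rw [hinner] at this
      simpa [Real.cos_neg, Real.sin_neg, ← sub_eq_add_neg] using this
    have hs : (inner ℝ v w : ℝ) = 0 := by
      have : 2 * (Real.sin θ * (inner ℝ v w : ℝ)) = 0 := by linarith
      have := mul_eq_zero.mp (by linarith : Real.sin θ * (inner ℝ v w : ℝ) = 0)
      tauto
    have hcos : Real.cos θ ≠ 1 := by
      intro hc
      have := Real.sin_sq_add_cos_sq θ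
      rw [hc] at this
      have : Real.sin θ = 0 := by nlinarith
      exact hsin this
    have htz : t = 0 := by
      have : Real.cos θ * t = t := by rw [← ht]; linarith
      have h2 : (Real.cos θ - 1) * t = 0 := by linarith
      rcases mul_eq_zero.mp h2 with h3 | h3
      · exact absurd (by linarith : Real.cos θ = 1) hcos
      · exact h3
    exact ⟨hs, htz⟩
  -- existence of one orthogonal unit vector
  have hn₀ne : n₀ ≠ 0 := by intro h0; rw [h0] at hn₀; simp at hn₀
  obtain ⟨w₀, hw₀mem, hw₀ne⟩ : ∃ w ∈ (ℝ ∙ n₀)ᗮ, w ≠ 0 := by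
    by_contra hcon
    push_neg at hcon
    have hbot : (ℝ ∙ n₀)ᗮ = ⊥ := by
      rw [Submodule.eq_bot_iff]
      exact fun x hx => hcon x hx
    have htop : (ℝ ∙ n₀) = ⊤ := Submodule.orthogonal_eq_bot_iff.mp hbot
    have h1 : Module.finrank ℝ (ℝ ∙ n₀) = 1 := finrank_span_singleton hn₀ne
    have h2 : Module.finrank ℝ (EuclideanSpace ℝ (Fin m)) = m := by simp
    rw [htop] at h1
    simp [finrank_top] at h1
    omega
  have hw₀u : ‖(‖w₀‖⁻¹ • w₀ : EuclideanSpace ℝ (Fin m))‖ = 1 := by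
    rw [norm_smul, norm_inv, norm_norm, inv_mul_cancel₀ (norm_ne_zero_iff.mpr hw₀ne)]
  have hw₀orth : (inner ℝ n₀ (‖w₀‖⁻¹ • w₀ : EuclideanSpace ℝ (Fin m)) : ℝ) = 0 := by
    rw [real_inner_smul_right]
    have := (Submodule.mem_orthogonal _ _).mp hw₀mem n₀ (Submodule.mem_span_singleton_self n₀)
    rw [this, mul_zero]
  have htz : t = 0 := (claim _ hw₀u hw₀orth).2
  refine ⟨?_, htz⟩
  by_contra hv
  have hvn : (inner ℝ n₀ (‖v‖⁻¹ • v : EuclideanSpace ℝ (Fin m)) : ℝ) = 0 := by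
    rw [real_inner_smul_right, real_inner_comm, ht, htz, mul_zero]
  have hvu : ‖(‖v‖⁻¹ • v : EuclideanSpace ℝ (Fin m))‖ = 1 := by
    rw [norm_smul, norm_inv, norm_norm, inv_mul_cancel₀ (norm_ne_zero_iff.mpr hv)]
  have := (claim _ hvu hvn).1
  rw [real_inner_smul_right, real_inner_self_eq_norm_sq] at this
  have hvnorm : ‖v‖ ≠ 0 := norm_ne_zero_iff.mpr hv
  have h2 : ‖v‖⁻¹ * ‖v‖ ^ 2 = 0 := this
  rw [sq, ← mul_assoc, inv_mul_cancel₀ hvnorm, one_mul] at h2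
  exact hvnorm h2


/-- For `d ≥ 3`, the image `𝔑` of `Φ(λ,n) = ((1-λ)n, λn)` is nowhere locally
contained in an affine hyperplane of `ℝ^{2d-2} ≅ ℝ^{d-1} × ℝ^{d-1}`. -/
theorem stmt_4 (d : ℕ) (hd : 3 ≤ d)
    (N : Set (EuclideanSpace ℝ (Fin (d - 1)) × EuclideanSpace ℝ (Fin (d - 1))))
    (hN : N = (fun p : ℝ × EuclideanSpace ℝ (Fin (d - 1)) =>
        (((1 - p.1) • p.2, p.1 • p.2) :
          EuclideanSpace ℝ (Fin (d - 1)) × EuclideanSpace ℝ (Fin (d - 1)))) ''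
        {p | ‖p.2‖ = 1})
    (p : EuclideanSpace ℝ (Fin (d - 1)) × EuclideanSpace ℝ (Fin (d - 1)))
    (hp : p ∈ N)
    (U : Set (EuclideanSpace ℝ (Fin (d - 1)) × EuclideanSpace ℝ (Fin (d - 1))))
    (hU : IsOpen U) (hpU : p ∈ U)
    (a b : EuclideanSpace ℝ (Fin (d - 1))) (c : ℝ) (hab : ¬(a = 0 ∧ b = 0)) :
    ¬(N ∩ U ⊆ {z | (inner ℝ a z.1 : ℝ) + (inner ℝ b z.2 : ℝ) = c}) := by
  intro hsub
  have hm : 2 ≤ d - 1 := by omega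
  subst hN
  obtain ⟨⟨l₀, n₀⟩, hn₀, hΦ⟩ := hp
  simp only [Set.mem_setOf_eq] at hn₀
  -- Φ is continuous
  set Φ : ℝ × EuclideanSpace ℝ (Fin (d - 1)) →
      EuclideanSpace ℝ (Fin (d - 1)) × EuclideanSpace ℝ (Fin (d - 1)) :=
    fun p => ((1 - p.1) • p.2, p.1 • p.2) with hΦdef
  have hΦcont : Continuous Φ := by
    apply Continuous.prodMk
    · exact ((continuous_const.sub continuous_fst).smul continuous_snd)
    · exact continuous_fst.smul continuous_snd
  have hopen : IsOpen (Φ ⁻¹' U) := hU.preimage hΦcont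
  have hmem : (l₀, n₀) ∈ Φ ⁻¹' U := by
    show Φ (l₀, n₀) ∈ U
    rw [show Φ (l₀, n₀) = p from hΦ]
    exact hpU
  obtain ⟨δ, hδpos, hball⟩ := Metric.isOpen_iff.mp hopen _ hmem
  -- the key equation for (λ, n) near (l₀, n₀) with ‖n‖ = 1
  have heq : ∀ lam : ℝ, ∀ n : EuclideanSpace ℝ (Fin (d - 1)), lam ∈ Metric.ball l₀ δ →
      n ∈ Metric.ball n₀ δ → ‖n‖ = 1 →
      (1 - lam) * (inner ℝ a n : ℝ) + lam * (inner ℝ b n : ℝ) = c := by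
    intro lam n hlam hn hnu
    have hmemU : Φ (lam, n) ∈ U := hball (by
      rw [← ball_prod_same]; exact Set.mk_mem_prod hlam hn)
    have hmemN : Φ (lam, n) ∈ Φ '' {p : ℝ × EuclideanSpace ℝ (Fin (d-1)) | ‖p.2‖ = 1} :=
      Set.mem_image_of_mem Φ hnu
    have := hsub ⟨hmemN, hmemU⟩
    simp only [Set.mem_setOf_eq, hΦdef] at this
    rwa [real_inner_smul_right, real_inner_smul_right] at this
  -- two values of λ give ⟨b - a, n⟩ = 0 on a ball
  have horth : ∀ n : EuclideanSpace ℝ (Fin (d - 1)), ‖n‖ = 1 → n ∈ Metric.ball n₀ δ →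
      (inner ℝ (b - a) n : ℝ) = 0 := by
    intro n hnu hn
    have h1 := heq l₀ n (Metric.mem_ball_self hδpos) hn hnu
    have h2 := heq (l₀ + δ/2) n (by rw [Metric.mem_ball, Real.dist_eq, add_sub_cancel_left, abs_of_pos (by linarith)]; linarith) hn hnu
    rw [inner_sub_left]
    nlinarith [h1, h2]
  have hba : b - a = 0 :=
    (key_lemma (d-1) hm n₀ hn₀ _ Metric.isOpen_ball (Metric.mem_ball_self hδpos)
      (b - a) 0 (fun n h1 h2 => horth n h1 h2)).1
  have hbeq : b = a := sub_eq_zero.mp hba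
  -- now ⟨a, n⟩ = c on the ball
  have hac : ∀ n : EuclideanSpace ℝ (Fin (d - 1)), ‖n‖ = 1 → n ∈ Metric.ball n₀ δ →
      (inner ℝ a n : ℝ) = c := by
    intro n hnu hn
    have h1 := heq l₀ n (Metric.mem_ball_self hδpos) hn hnu
    rw [hbeq] at h1
    linarith
  have := key_lemma (d-1) hm n₀ hn₀ _ Metric.isOpen_ball (Metric.mem_ball_self hδpos)
      a c (fun n h1 h2 => hac n h1 h2)
  exact hab ⟨this.1, by rw [hbeq, this.1]⟩
end

section
/- Let n_1, …, n_5 be unit vectors in ℝ² whose ten associated vectors appear in the cyclic order n_1, −n_3, n_5, n_2, −n_4, −n_1, n_3, −n_5, −n_2, n_4 around the unit circle. Then each of the four triples {n_1,n_2,n_3}, {n_1,n_3,n_5}, {n_2,n_3,n_4}, {n_3,n_4,n_5} positively spans ℝ². -/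
open Real

/-- `{v₁,v₂,v₃}` positively spans the plane. -/
def PosSpan2 (v₁ v₂ v₃ : ℝ × ℝ) : Prop :=
  ∀ x : ℝ × ℝ, ∃ a b c : ℝ, 0 ≤ a ∧ 0 ≤ b ∧ 0 ≤ c ∧ x = a • v₁ + b • v₂ + c • v₃

lemma posSpan_aux (v₁ v₂ v₃ : ℝ × ℝ) (a b c : ℝ) (ha : 0 < a) (hb : 0 < b) (hc : 0 < c)
    (hsum : a • v₁ + b • v₂ + c • v₃ = 0)
    (hdet : v₁.1 * v₂.2 - v₁.2 * v₂.1 ≠ 0) : PosSpan2 v₁ v₂ v₃ := by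
  intro x
  set d := v₁.1 * v₂.2 - v₁.2 * v₂.1 with hd
  set p := (x.1 * v₂.2 - x.2 * v₂.1) / d with hp
  set q := (v₁.1 * x.2 - v₁.2 * x.1) / d with hq
  have hx1 : p * v₁.1 + q * v₂.1 = x.1 := by
    rw [hp, hq]; field_simp; ring
  have hx2 : p * v₁.2 + q * v₂.2 = x.2 := by
    rw [hp, hq]; field_simp; ring
  set t := max (max (-p / a) (-q / b)) 0 with ht
  have ht0 : 0 ≤ t := le_max_right _ _
  have htp : -p / a ≤ t := le_trans (le_max_left _ _) (le_max_left _ _)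
  have htq : -q / b ≤ t := le_trans (le_max_right _ _) (le_max_left _ _)
  have hpa : 0 ≤ p + t * a := by
    have := (div_le_iff₀ ha).mp htp; linarith
  have hqb : 0 ≤ q + t * b := by
    have := (div_le_iff₀ hb).mp htq; linarith
  refine ⟨p + t * a, q + t * b, t * c, hpa, hqb, mul_nonneg ht0 hc.le, ?_⟩
  have hs1 : a * v₁.1 + b * v₂.1 + c * v₃.1 = 0 := congrArg Prod.fst hsum
  have hs2 : a * v₁.2 + b * v₂.2 + c * v₃.2 = 0 := congrArg Prod.snd hsum
  have : x = (x.1, x.2) := rfl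
  rw [this, Prod.ext_iff]
  constructor
  · show x.1 = (p + t * a) * v₁.1 + (q + t * b) * v₂.1 + t * c * v₃.1
    nlinarith [hx1, hs1]
  · show x.2 = (p + t * a) * v₁.2 + (q + t * b) * v₂.2 + t * c * v₃.2
    nlinarith [hx2, hs2]

lemma posSpan_angle (α β γ : ℝ) (h1 : α < β) (h2 : β < α + π) (h3 : β < γ)
    (h4 : γ < β + π) (h5 : α + π < γ) :
    PosSpan2 (cos α, sin α) (cos β, sin β) (cos γ, sin γ) := by
  have hsb : 0 < sin (β - α) := sin_pos_of_pos_of_lt_pi (by linarith) (by linarith)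
  have hsg : 0 < sin (γ - β) := sin_pos_of_pos_of_lt_pi (by linarith) (by linarith)
  have hsga : 0 < -sin (γ - α) := by
    have : 0 < sin (γ - α - π) := sin_pos_of_pos_of_lt_pi (by linarith) (by linarith)
    rw [Real.sin_sub_pi] at this; linarith
  apply posSpan_aux _ _ _ (sin (γ - β)) (-sin (γ - α)) (sin (β - α)) hsg hsga hsb
  · have e1 : sin (γ - β) * cos α + -sin (γ - α) * cos β + sin (β - α) * cos γ = 0 := by
      simp [Real.sin_sub]; ring
    have e2 : sin (γ - β) * sin α + -sin (γ - α) * sin β + sin (β - α) * sin γ = 0 := by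
      simp [Real.sin_sub]; ring
    exact Prod.ext e1 e2
  · show cos α * sin β - sin α * cos β ≠ 0
    have : cos α * sin β - sin α * cos β = sin (β - α) := by
      simp [Real.sin_sub]; ring
    rw [this]; exact hsb.ne'

lemma posSpan_swap23 {v₁ v₂ v₃ : ℝ × ℝ} (h : PosSpan2 v₁ v₂ v₃) : PosSpan2 v₁ v₃ v₂ := by
  intro x
  obtain ⟨a, b, c, ha, hb, hc, hx⟩ := h x
  exact ⟨a, c, b, ha, hc, hb, by rw [hx]; abel⟩

lemma posSpan_swap12 {v₁ v₂ v₃ : ℝ × ℝ} (h : PosSpan2 v₁ v₂ v₃) : PosSpan2 v₂ v₁ v₃ := by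
  intro x
  obtain ⟨a, b, c, ha, hb, hc, hx⟩ := h x
  exact ⟨b, a, c, hb, ha, hc, by rw [hx]; abel⟩

lemma pi_step {x y : ℝ} (hlt : x < y) (hlt2 : y < x + 2 * π)
    (hc : cos y = -cos x) (hs : sin y = -sin x) : y = x + π := by
  have hcos : cos (y - x) = -1 := by
    rw [Real.cos_sub, hc, hs]
    have := sin_sq_add_cos_sq x
    nlinarith
  obtain ⟨k, hk⟩ := Real.cos_eq_neg_one_iff.mp hcos
  have hπ := Real.pi_pos
  have hk0 : k = 0 := by
    by_contra hne
    rcases lt_or_gt_of_ne hne with hk1 | hk1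
    · have : (k : ℝ) ≤ -1 := by exact_mod_cast (by omega : k ≤ -1)
      nlinarith
    · have : (1 : ℝ) ≤ (k : ℝ) := by exact_mod_cast hk1
      nlinarith
  rw [hk0] at hk
  push_cast at hk
  linarith

/-- In a `σ₅`-pattern, each of the four triples `{n₁,n₂,n₃}`, `{n₁,n₃,n₅}`,
`{n₂,n₃,n₄}`, `{n₃,n₄,n₅}` positively spans `ℝ²`. -/
theorem stmt_7 (n : Fin 5 → ℝ × ℝ) (θ : Fin 10 → ℝ)
    (hmono : StrictMono θ) (hrange : θ 9 < θ 0 + 2 * Real.pi)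
    (horder : (![n 0, -n 2, n 4, n 1, -n 3, -n 0, n 2, -n 4, -n 1, n 3] : Fin 10 → ℝ × ℝ) =
      fun i => (Real.cos (θ i), Real.sin (θ i))) :
    PosSpan2 (n 0) (n 1) (n 2) ∧ PosSpan2 (n 0) (n 2) (n 4) ∧
    PosSpan2 (n 1) (n 2) (n 3) ∧ PosSpan2 (n 2) (n 3) (n 4) := by
  have E0 : n 0 = (cos (θ 0), sin (θ 0)) := congrFun horder 0
  have E1 : -n 2 = (cos (θ 1), sin (θ 1)) := congrFun horder 1
  have E2 : n 4 = (cos (θ 2), sin (θ 2)) := congrFun horder 2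
  have E3 : n 1 = (cos (θ 3), sin (θ 3)) := congrFun horder 3
  have E4 : -n 3 = (cos (θ 4), sin (θ 4)) := congrFun horder 4
  have E5 : -n 0 = (cos (θ 5), sin (θ 5)) := congrFun horder 5
  have E6 : n 2 = (cos (θ 6), sin (θ 6)) := congrFun horder 6
  have E9 : n 3 = (cos (θ 9), sin (θ 9)) := congrFun horder 9
  rw [E0, Prod.neg_mk, Prod.mk.injEq] at E5
  rw [E6, Prod.neg_mk, Prod.mk.injEq] at E1
  rw [E9, Prod.neg_mk, Prod.mk.injEq] at E4
  -- monotonicity facts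
  have m01 : θ 0 < θ 1 := hmono (by decide)
  have m12 : θ 1 < θ 2 := hmono (by decide)
  have m23 : θ 2 < θ 3 := hmono (by decide)
  have m34 : θ 3 < θ 4 := hmono (by decide)
  have m45 : θ 4 < θ 5 := hmono (by decide)
  have m56 : θ 5 < θ 6 := hmono (by decide)
  have m67 : θ 6 < θ 7 := hmono (by decide)
  have m78 : θ 7 < θ 8 := hmono (by decide)
  have m89 : θ 8 < θ 9 := hmono (by decide)
  have hπ := Real.pi_pos
  -- θ5 = θ0 + π
  have h5 : θ 5 = θ 0 + π :=
    pi_step (by linarith) (by linarith) E5.1.symm E5.2.symm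
  -- θ6 = θ1 + π
  have h6 : θ 6 = θ 1 + π := by
    exact pi_step (by linarith) (by linarith) (by linarith [E1.1]) (by linarith [E1.2])
  -- θ9 = θ4 + π
  have h9 : θ 9 = θ 4 + π :=
    pi_step (by linarith) (by linarith) (by linarith [E4.1]) (by linarith [E4.2])
  refine ⟨?_, ?_, ?_, ?_⟩
  · rw [E0, E3, E6]
    exact posSpan_angle _ _ _ (by linarith) (by linarith) (by linarith)
      (by linarith) (by linarith)
  · rw [E0, E6, E2]
    exact posSpan_swap23 (posSpan_angle (θ 0) (θ 2) (θ 6) (by linarith) (by linarith)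
      (by linarith) (by linarith) (by linarith))
  · rw [E3, E6, E9]
    exact posSpan_angle _ _ _ (by linarith) (by linarith) (by linarith)
      (by linarith) (by linarith)
  · rw [E6, E9, E2]
    exact posSpan_swap23 (posSpan_swap12 (posSpan_angle (θ 2) (θ 6) (θ 9) (by linarith)
      (by linarith) (by linarith) (by linarith) (by linarith)))
end

section
/- Let H_1, …, H_k be closed halfplanes in ℝ² each bounded by a line through the origin, with outward normals n_1, …, n_k. Suppose that for every unit vector u ∈ S¹ there exist indices i < j < k' such that {n_i, n_j, n_{k'}} positively spans ℝ², ⟨u, n_i⟩ < 0, and ⟨u, n_{k'}⟩ > 0. Then for every directed line g in ℝ² not passing through the origin and intersecting each H_i, there exist indices i < j such that g exits H_j strictly before entering H_i (i.e., the last point of g ∩ H_j along the direction of g precedes the first point of g ∩ H_i). -/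
/-- `{v₁,v₂,v₃}` positively spans the Euclidean plane. -/
def PosSpanE2 (v₁ v₂ v₃ : EuclideanSpace ℝ (Fin 2)) : Prop :=
  ∀ x : EuclideanSpace ℝ (Fin 2),
    ∃ a b c : ℝ, 0 ≤ a ∧ 0 ≤ b ∧ 0 ≤ c ∧ x = a • v₁ + b • v₂ + c • v₃

lemma posspan_contra (v₁ v₂ v₃ x : EuclideanSpace ℝ (Fin 2))
    (hps : PosSpanE2 v₁ v₂ v₃)
    (h1 : (inner ℝ v₁ x : ℝ) ≤ 0) (h2 : (inner ℝ v₂ x : ℝ) ≤ 0)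
    (h3 : (inner ℝ v₃ x : ℝ) ≤ 0) (hx : x ≠ 0) : False := by
  obtain ⟨a, b, c, ha, hb, hc, hxe⟩ := hps x
  have hkey : (‖x‖ ^ 2 : ℝ) =
      a * (inner ℝ v₁ x : ℝ) + b * (inner ℝ v₂ x : ℝ) + c * (inner ℝ v₃ x : ℝ) := by
    rw [← real_inner_self_eq_norm_sq]
    conv_lhs => rw [hxe]
    simp only [hxe, inner_add_left, real_inner_smul_left, inner_add_right,
      real_inner_smul_right]
    ring
  have hxpos : (0 : ℝ) < ‖x‖ := norm_pos_iff.mpr hx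
  nlinarith [mul_nonneg ha (neg_nonneg.mpr h1), mul_nonneg hb (neg_nonneg.mpr h2),
    mul_nonneg hc (neg_nonneg.mpr h3)]

/-- Sufficiency direction of the characterization of pinning patterns: if for
every direction `u` there are `i < j < l` with `{nᵢ,nⱼ,n_l}` positively
spanning, `⟨u,nᵢ⟩ < 0` and `⟨u,n_l⟩ > 0`, then every directed line missing the
origin and meeting all halfplanes exits some `Hⱼ` strictly before entering some
`Hᵢ` with `i < j`. -/
theorem stmt_9 (k : ℕ) (n : Fin k → EuclideanSpace ℝ (Fin 2)) (hn : ∀ i, ‖n i‖ = 1)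
    (hcond : ∀ u : EuclideanSpace ℝ (Fin 2), ‖u‖ = 1 →
      ∃ i j l : Fin k, i < j ∧ j < l ∧ PosSpanE2 (n i) (n j) (n l) ∧
        (inner ℝ u (n i) : ℝ) < 0 ∧ 0 < (inner ℝ u (n l) : ℝ))
    (u p : EuclideanSpace ℝ (Fin 2)) (hu : ‖u‖ = 1)
    (hg0 : ∀ t : ℝ, p + t • u ≠ 0)
    (hmeet : ∀ i, ∃ t : ℝ, (inner ℝ (n i) (p + t • u) : ℝ) ≤ 0) :
    ∃ i j : Fin k, i < j ∧ ∀ s t : ℝ,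
      (inner ℝ (n j) (p + s • u) : ℝ) ≤ 0 → (inner ℝ (n i) (p + t • u) : ℝ) ≤ 0 → s < t := by
  obtain ⟨i, j, l, hij, hjl, hps, hui, hul⟩ := hcond u hu
  -- rewrite the inner products along the line
  have hline : ∀ (m : Fin k) (t : ℝ),
      (inner ℝ (n m) (p + t • u) : ℝ) = (inner ℝ (n m) p : ℝ) + t * (inner ℝ (n m) u : ℝ) := by
    intro m t
    simp only [inner_add_right, real_inner_smul_right]
  have hci : (inner ℝ (n i) u : ℝ) < 0 := by rwa [real_inner_comm]
  have hcl : (0 : ℝ) < (inner ℝ (n l) u : ℝ) := by rwa [real_inner_comm]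
  -- monotonicity facts
  have hmono_i : ∀ s t : ℝ, t ≤ s → (inner ℝ (n i) (p + t • u) : ℝ) ≤ 0 →
      (inner ℝ (n i) (p + s • u) : ℝ) ≤ 0 := by
    intro s t hts h
    rw [hline] at h ⊢
    nlinarith
  have hmono_l : ∀ s t : ℝ, s ≤ t → (inner ℝ (n l) (p + t • u) : ℝ) ≤ 0 →
      (inner ℝ (n l) (p + s • u) : ℝ) ≤ 0 := by
    intro s t hts h
    rw [hline] at h ⊢
    nlinarith
  by_cases hIL : ∀ s t : ℝ,
      (inner ℝ (n l) (p + s • u) : ℝ) ≤ 0 → (inner ℝ (n i) (p + t • u) : ℝ) ≤ 0 → s < t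
  · exact ⟨i, l, hij.trans hjl, hIL⟩
  push_neg at hIL
  obtain ⟨s, t, hls, hit, hts⟩ := hIL
  -- at parameter s, both H_i and H_l contain the point
  have his : (inner ℝ (n i) (p + s • u) : ℝ) ≤ 0 := hmono_i s t hts hit
  rcases lt_trichotomy ((inner ℝ (n j) u : ℝ)) 0 with hcj | hcj | hcj
  · -- entering halfplane: candidate pair (j, l)
    by_cases hJL : ∀ s' t' : ℝ,
        (inner ℝ (n l) (p + s' • u) : ℝ) ≤ 0 → (inner ℝ (n j) (p + t' • u) : ℝ) ≤ 0 → s' < t'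
    · exact ⟨j, l, hjl, hJL⟩
    push_neg at hJL
    obtain ⟨s', t', hls', hjt', hts'⟩ := hJL
    -- take the point at max s s'
    set r := max s s' with hr
    have hjr : (inner ℝ (n j) (p + r • u) : ℝ) ≤ 0 := by
      have : t' ≤ r := le_trans hts' (le_max_right _ _)
      rw [hline] at hjt' ⊢
      nlinarith
    have hir : (inner ℝ (n i) (p + r • u) : ℝ) ≤ 0 :=
      hmono_i r s (le_max_left _ _) his
    have hlr : (inner ℝ (n l) (p + r • u) : ℝ) ≤ 0 := by
      rcases le_total s' s with h | h
      · have : r = s := max_eq_left h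
        rw [this]; exact hls
      · have : r = s' := max_eq_right h
        rw [this]; exact hls'
    exact (posspan_contra _ _ _ _ hps hir hjr hlr (hg0 r)).elim
  · -- ⟨n_j, u⟩ = 0
    obtain ⟨t0, hjt0⟩ := hmeet j
    have hjs : (inner ℝ (n j) (p + s • u) : ℝ) ≤ 0 := by
      rw [hline] at hjt0 ⊢
      rw [hcj] at hjt0 ⊢
      simpa using hjt0
    have hls' : (inner ℝ (n l) (p + s • u) : ℝ) ≤ 0 := hls
    exact (posspan_contra _ _ _ _ hps his hjs hls' (hg0 s)).elim
  · -- exiting halfplane: candidate pair (i, j)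
    by_cases hIJ : ∀ s' t' : ℝ,
        (inner ℝ (n j) (p + s' • u) : ℝ) ≤ 0 → (inner ℝ (n i) (p + t' • u) : ℝ) ≤ 0 → s' < t'
    · exact ⟨i, j, hij, hIJ⟩
    push_neg at hIJ
    obtain ⟨s', t', hjs', hit', hts'⟩ := hIJ
    set r := min s s' with hr
    have hjr : (inner ℝ (n j) (p + r • u) : ℝ) ≤ 0 := by
      have : r ≤ s' := min_le_right _ _
      rw [hline] at hjs' ⊢
      nlinarith
    have hlr : (inner ℝ (n l) (p + r • u) : ℝ) ≤ 0 := hmono_l r s (min_le_left _ _) hls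
    have hir : (inner ℝ (n i) (p + r • u) : ℝ) ≤ 0 := by
      rcases le_total s s' with h | h
      · have : r = s := min_eq_left h
        rw [this]; exact his
      · have : r = s' := min_eq_right h
        rw [this]; exact hmono_i s' t' hts' hit'
    exact (posspan_contra _ _ _ _ hps hir hjr hlr (hg0 r)).elim
end

section
/- Let d ≥ 3 and m ≥ 1. Let 𝔛_m ⊆ (ℝ × S^{d-2})^m be the set of m-tuples F of pairs (λ_i, n_i) such that some subtuple of size at most 2d−2 has linearly dependent images under Φ(λ,n) = ((1−λ)n, λn) ∈ ℝ^{2d-2}. Then 𝔛_m has empty interior in (ℝ × S^{d-2})^m: arbitrarily close to any m-tuple F there is an m-tuple F' such that every subtuple of F' of size at most 2d−2 has linearly independent Φ-images. -/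
open Submodule Set

private lemma aux_fin_indep {M : Type*} [AddCommGroup M] [Module ℝ M] :
    ∀ (n : ℕ) (w : Fin n → M),
      (∀ i : Fin n, w i ∉ Submodule.span ℝ (w '' {j | j < i})) → LinearIndependent ℝ w := by
  intro n
  induction n with
  | zero => intro w _; exact linearIndependent_empty_type
  | succ n ih =>
    intro w hw
    have hsnoc : w = Fin.snoc (fun i : Fin n => w i.castSucc) (w (Fin.last n)) := by
      funext i
      induction i using Fin.lastCases with
      | last => simp
      | cast j => simp
    rw [hsnoc, linearIndependent_fin_snoc]
    constructor
    · apply ih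
      intro i hi
      apply hw i.castSucc
      refine Submodule.span_mono ?_ hi
      rintro x ⟨j, hj, rfl⟩
      exact ⟨j.castSucc, by simpa using hj, rfl⟩
    · have : Set.range (fun i : Fin n => w i.castSucc) = w '' {j | j < Fin.last n} := by
        ext x
        constructor
        · rintro ⟨j, rfl⟩; exact ⟨j.castSucc, Fin.castSucc_lt_last j, rfl⟩
        · rintro ⟨j, hj, rfl⟩
          exact ⟨j.castLT (by simpa [Fin.lt_iff_val_lt_val] using hj), by simp⟩
      rw [this]
      exact hw (Fin.last n)

private lemma aux_finset_indep {ι M : Type*} [LinearOrder ι] [AddCommGroup M] [Module ℝ M]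
    (v : ι → M) (s : Finset ι)
    (h : ∀ i ∈ s, v i ∉ Submodule.span ℝ (v '' {j | j ∈ s ∧ j < i})) :
    LinearIndependent ℝ (fun i : s => v i) := by
  have e : Fin s.card ≃o s := s.orderIsoOfFin rfl
  rw [← linearIndependent_equiv e.toEquiv]
  apply aux_fin_indep
  intro i hi
  refine h (e i) (e i).2 (Submodule.span_mono ?_ hi)
  rintro x ⟨j, hj, rfl⟩
  exact ⟨(e j : ι), ⟨(e j).2, by exact_mod_cast e.strictMono hj⟩, rfl⟩

private lemma aux_sphere_avoid {E : Type*} [NormedAddCommGroup E] [NormedSpace ℝ E]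
    [FiniteDimensional ℝ E] {ι : Type*} [Finite ι] (W : ι → Submodule ℝ E)
    (hW : ∀ i, W i ≠ ⊤) (n₀ : E) (hn₀ : ‖n₀‖ = 1) (δ : ℝ) (hδ : 0 < δ) :
    ∃ n : E, ‖n‖ = 1 ∧ ‖n - n₀‖ < δ ∧ ∀ i, n ∉ W i := by
  have hdense : Dense (⋂ i, ((W i : Set E)ᶜ)) := by
    apply dense_iInter_of_isOpen
    · intro i
      exact (Submodule.closed_of_finiteDimensional (W i)).isOpen_compl
    · intro i
      rw [← interior_eq_empty_iff_dense_compl]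
      by_contra h
      exact hW i (Submodule.eq_top_of_nonempty_interior' _
        (Set.nonempty_iff_ne_empty.2 h))
  set δ' : ℝ := min (δ / 2) (1 / 2) with hδ'def
  have hδ'pos : 0 < δ' := lt_min (by linarith) (by norm_num)
  obtain ⟨x, hx, hxmem⟩ := hdense.exists_mem_open Metric.isOpen_ball
    ⟨n₀, Metric.mem_ball_self hδ'pos⟩
  rw [Metric.mem_ball, dist_eq_norm] at hxmem
  have hxnorm : |‖x‖ - 1| < δ' := by
    calc |‖x‖ - 1| = |‖x‖ - ‖n₀‖| := by rw [hn₀]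
    _ ≤ ‖x - n₀‖ := abs_norm_sub_norm_le _ _
    _ < δ' := hxmem
  have hxpos : 0 < ‖x‖ := by
    have : δ' ≤ 1/2 := min_le_right _ _
    have := abs_lt.1 hxnorm
    linarith
  refine ⟨‖x‖⁻¹ • x, ?_, ?_, ?_⟩
  · rw [norm_smul, norm_inv, norm_norm, inv_mul_cancel₀ hxpos.ne']
  · have h1 : ‖‖x‖⁻¹ • x - x‖ = |‖x‖ - 1| := by
      rw [show ‖x‖⁻¹ • x - x = (‖x‖⁻¹ - 1) • x by rw [sub_smul, one_smul],
        norm_smul, Real.norm_eq_abs]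
      rw [abs_sub_comm, show (1 : ℝ) - ‖x‖⁻¹ = (‖x‖ - 1) * ‖x‖⁻¹ by
        field_simp, abs_mul, abs_of_nonneg (inv_nonneg.2 hxpos.le)]
      rw [mul_assoc, inv_mul_cancel₀ hxpos.ne', mul_one, abs_sub_comm]
    calc ‖‖x‖⁻¹ • x - n₀‖ ≤ ‖‖x‖⁻¹ • x - x‖ + ‖x - n₀‖ := norm_sub_le_norm_sub_add_norm_sub _ _ _
    _ < δ' + δ' := by rw [h1]; exact add_lt_add hxnorm hxmem
    _ ≤ δ := by have : δ' ≤ δ/2 := min_le_left _ _; linarith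
  · intro i hmem
    have := Set.mem_iInter.1 hx i
    apply this
    have := (W i).smul_mem ‖x‖ hmem
    rwa [smul_smul, mul_inv_cancel₀ hxpos.ne', one_smul] at this

private lemma aux_phi_avoid {E : Type*} [NormedAddCommGroup E] [NormedSpace ℝ E]
    [FiniteDimensional ℝ E] {ι : Type*} [Finite ι] (V : ι → Submodule ℝ (E × E))
    (hV : ∀ i, V i ≠ ⊤) (lam₀ : ℝ) (n₀ : E) (hn₀ : ‖n₀‖ = 1) (ε : ℝ) (hε : 0 < ε) :
    ∃ (l : ℝ) (n : E), ‖n‖ = 1 ∧ |l - lam₀| < ε ∧ ‖n - n₀‖ < ε ∧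
      ∀ i, (((1 - l) • n, l • n) : E × E) ∉ V i := by
  have hφ : ∀ i, ∃ φ : Module.Dual ℝ (E × E), φ ≠ 0 ∧ (V i).map φ = ⊥ :=
    fun i => Submodule.exists_dual_map_eq_bot_of_lt_top (lt_top_iff_ne_top.2 (hV i)) inferInstance
  choose φ hφne hφbot using hφ
  set φ₁ : ι → E →ₗ[ℝ] ℝ := fun i => (φ i).comp (LinearMap.inl ℝ E E) with hφ₁
  set φ₂ : ι → E →ₗ[ℝ] ℝ := fun i => (φ i).comp (LinearMap.inr ℝ E E) with hφ₂
  have hsplit : ∀ i (x y : E), φ i (x, y) = φ₁ i x + φ₂ i y := by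
    intro i x y
    have : ((x, y) : E × E) = (x, 0) + (0, y) := by simp
    rw [this, map_add]; rfl
  set W : ι → Submodule ℝ E := fun i => LinearMap.ker (φ₁ i) ⊓ LinearMap.ker (φ₂ i) with hWdef
  have hWne : ∀ i, W i ≠ ⊤ := by
    intro i htop
    apply hφne i
    apply LinearMap.ext
    rintro ⟨x, y⟩
    have hx : x ∈ W i := htop ▸ Submodule.mem_top
    have hy : y ∈ W i := htop ▸ Submodule.mem_top
    rw [hsplit i x y]
    simp only [LinearMap.zero_apply]
    rw [(Submodule.mem_inf.1 hx).1, (Submodule.mem_inf.1 hy).2, add_zero]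
  obtain ⟨n, hn1, hnd, hnW⟩ := aux_sphere_avoid W hWne n₀ hn₀ ε hε
  have hce : ∀ i, ¬(φ₁ i n = 0 ∧ φ₂ i n = 0) := by
    intro i h
    exact hnW i (Submodule.mem_inf.2 ⟨h.1, h.2⟩)
  set r : ι → ℝ := fun i =>
    if φ₂ i n - φ₁ i n = 0 then lam₀ + ε + 1 else -(φ₁ i n) / (φ₂ i n - φ₁ i n) with hrdef
  obtain ⟨l, hl, hlB⟩ := (Set.Ioo_infinite (by linarith : lam₀ < lam₀ + ε)).exists_notMem_finite
    (Set.finite_range r)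
  refine ⟨l, n, hn1, ?_, hnd, ?_⟩
  · rw [abs_lt]; constructor <;> [linarith [hl.1]; linarith [hl.2]]
  · intro i hmem
    have hval : φ i ((1 - l) • n, l • n) = 0 := by
      have := Submodule.mem_map_of_mem (f := φ i) hmem
      rw [hφbot i, Submodule.mem_bot] at this
      exact this
    have hcalc : φ i ((1 - l) • n, l • n) = φ₁ i n + l * (φ₂ i n - φ₁ i n) := by
      have : (((1 - l) • n, l • n) : E × E) = (1 - l) • (n, 0) + l • (0, n) := by
        simp [Prod.ext_iff]
      rw [this, map_add, map_smul, map_smul]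
      have h1 : φ i ((n, 0) : E × E) = φ₁ i n := rfl
      have h2 : φ i ((0, n) : E × E) = φ₂ i n := rfl
      rw [h1, h2]; simp; ring
    rw [hcalc] at hval
    by_cases hc : φ₂ i n - φ₁ i n = 0
    · rw [hc, mul_zero, add_zero] at hval
      exact hce i ⟨hval, by rw [sub_eq_zero] at hc; rw [hc, hval]⟩
    · apply hlB
      refine ⟨i, ?_⟩
      rw [hrdef]
      simp only [hc, if_false]
      field_simp
      linarith [hval]

/-- The set `𝔛ₘ` of `m`-tuples of screens having a subtuple of size `≤ 2d-2`
with linearly dependent `Φ`-images has empty interior: arbitrarily close to any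
tuple there is a tuple all of whose small subtuples have linearly independent
`Φ`-images, where `Φ(λ,n) = ((1-λ)n, λn)`. -/
theorem stmt_14 (d m : ℕ) (hd : 3 ≤ d) (hm : 1 ≤ m)
    (F : Fin m → ℝ × EuclideanSpace ℝ (Fin (d - 1))) (hF : ∀ i, ‖(F i).2‖ = 1)
    (ε : ℝ) (hε : 0 < ε) :
    ∃ F' : Fin m → ℝ × EuclideanSpace ℝ (Fin (d - 1)),
      (∀ i, ‖(F' i).2‖ = 1) ∧
      (∀ i, |(F' i).1 - (F i).1| < ε ∧ ‖(F' i).2 - (F i).2‖ < ε) ∧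
      ∀ s : Finset (Fin m), s.card ≤ 2 * d - 2 →
        LinearIndependent ℝ (fun i : s =>
          ((((1 - (F' i).1) • (F' i).2, (F' i).1 • (F' i).2)) :
            EuclideanSpace ℝ (Fin (d - 1)) × EuclideanSpace ℝ (Fin (d - 1)))) := by
  classical
  set Φ : ℝ × EuclideanSpace ℝ (Fin (d - 1)) →
      EuclideanSpace ℝ (Fin (d - 1)) × EuclideanSpace ℝ (Fin (d - 1)) :=
    fun p => ((1 - p.1) • p.2, p.1 • p.2) with hΦ
  -- dimension of E × E
  have hdim : Module.finrank ℝ (EuclideanSpace ℝ (Fin (d - 1)) × EuclideanSpace ℝ (Fin (d - 1))) = 2 * d - 2 := by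
    rw [Module.finrank_prod, finrank_euclideanSpace_fin]
    omega
  -- spans of few vectors are proper
  have hspan_ne_top : ∀ (f : Fin m → EuclideanSpace ℝ (Fin (d - 1)) × EuclideanSpace ℝ (Fin (d - 1))) (t : Finset (Fin m)), t.card ≤ 2 * d - 3 →
      Submodule.span ℝ (f '' ↑t) ≠ ⊤ := by
    intro f t ht htop
    have h1 : (f '' ↑t : Set (EuclideanSpace ℝ (Fin (d - 1)) × EuclideanSpace ℝ (Fin (d - 1)))) = ↑(t.image f) := by rw [Finset.coe_image]
    have h2 : Module.finrank ℝ (Submodule.span ℝ (f '' ↑t)) ≤ 2 * d - 3 := by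
      rw [h1]
      exact le_trans (finrank_span_finset_le_card (t.image f)) (le_trans
        (Finset.card_image_le) ht)
    rw [htop] at h2
    rw [finrank_top, hdim] at h2
    omega
  -- main induction
  have key : ∀ k : ℕ, ∃ g : Fin m → ℝ × EuclideanSpace ℝ (Fin (d - 1)),
      (∀ i, ‖(g i).2‖ = 1) ∧
      (∀ i, |(g i).1 - (F i).1| < ε ∧ ‖(g i).2 - (F i).2‖ < ε) ∧
      (∀ i : Fin m, (i : ℕ) < k → ∀ t : Finset (Fin m), (∀ j ∈ t, j < i) →
        t.card ≤ 2 * d - 3 → Φ (g i) ∉ Submodule.span ℝ ((fun j => Φ (g j)) '' ↑t)) := by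
    intro k
    induction k with
    | zero =>
      exact ⟨F, hF, fun i => ⟨by simpa using hε, by simpa using hε⟩,
        fun i hi => absurd hi (by omega)⟩
    | succ k ih =>
      obtain ⟨g, hg1, hg2, hg3⟩ := ih
      by_cases hk : k < m
      · set i₀ : Fin m := ⟨k, hk⟩ with hi₀
        set ι := {t : Finset (Fin m) // (∀ j ∈ t, j < i₀) ∧ t.card ≤ 2 * d - 3} with hι
        set V : ι → Submodule ℝ (EuclideanSpace ℝ (Fin (d - 1)) × EuclideanSpace ℝ (Fin (d - 1))) :=
          fun t => Submodule.span ℝ ((fun j => Φ (g j)) '' ↑t.1) with hV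
        have hVne : ∀ t : ι, V t ≠ ⊤ := fun t => hspan_ne_top _ _ t.2.2
        obtain ⟨l, n, hn1, hld, hnd, havoid⟩ :=
          aux_phi_avoid V hVne (F i₀).1 (F i₀).2 (hF i₀) ε hε
        set g' : Fin m → ℝ × EuclideanSpace ℝ (Fin (d - 1)) := Function.update g i₀ (l, n) with hg'
        have hg'eq : ∀ j : Fin m, j ≠ i₀ → g' j = g j := by
          intro j hj; rw [hg', Function.update_of_ne hj]
        have hg'i₀ : g' i₀ = (l, n) := by rw [hg', Function.update_self]
        refine ⟨g', ?_, ?_, ?_⟩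
        · intro i
          by_cases hi : i = i₀
          · rw [hi, hg'i₀]; exact hn1
          · rw [hg'eq i hi]; exact hg1 i
        · intro i
          by_cases hi : i = i₀
          · rw [hi, hg'i₀]; exact ⟨hld, hnd⟩
          · rw [hg'eq i hi]; exact hg2 i
        · intro i hi t ht htc
          have himg : (fun j => Φ (g' j)) '' ↑t = (fun j => Φ (g j)) '' ↑t := by
            apply Set.image_congr
            intro j hj
            rw [hg'eq j (by
              have : j < i := ht j hj
              have : (j : ℕ) < (i : ℕ) := this
              intro hcon
              have hii : (i : ℕ) ≤ k := by omega
              rw [hcon] at this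
              simp only [hi₀] at this
              omega)]
          rw [himg]
          by_cases hii : i = i₀
          · rw [hii, hg'i₀]
            have ht' : ∀ j ∈ t, j < i₀ := fun j hj => hii ▸ ht j hj
            exact havoid ⟨t, ht', htc⟩
          · have hik : (i : ℕ) < k := by
              rcases Nat.lt_succ_iff_lt_or_eq.1 hi with h | h
              · exact h
              · exact absurd (Fin.ext h : i = i₀) hii
            rw [hg'eq i hii]
            exact hg3 i hik t ht htc
      · refine ⟨g, hg1, hg2, fun i hi => hg3 i (by omega) ⟩
  obtain ⟨g, hg1, hg2, hg3⟩ := key m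
  refine ⟨g, hg1, hg2, ?_⟩
  intro s hs
  have := aux_finset_indep (fun j => Φ (g j)) s ?_
  · exact this
  · intro i hi
    set t := s.filter (· < i) with htdef
    have hcoe : {j | j ∈ s ∧ j < i} = (↑t : Set (Fin m)) := by
      ext j; simp [htdef]
    rw [hcoe]
    have htc : t.card ≤ 2 * d - 3 := by
      have hsub : t ⊆ s.erase i := by
        intro j hj
        rw [Finset.mem_filter] at hj
        exact Finset.mem_erase.2 ⟨ne_of_lt hj.2, hj.1⟩
      have := Finset.card_le_card hsub
      rw [Finset.card_erase_of_mem hi] at this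
      omega
    exact hg3 i i.isLt t (fun j hj => (Finset.mem_filter.1 hj).2) htc
end

section
/- Let n_1, …, n_5 ∈ S¹ be such that the ten vectors appear counterclockwise in the cyclic order n_1, −n_3, n_5, n_2, −n_4, −n_1, n_3, −n_5, −n_2, n_4 (a σ₅-pattern). Then for every u ∈ S¹ there exist indices i < j < k in {1,…,5} such that {n_i, n_j, n_k} positively spans ℝ², ⟨u, n_i⟩ < 0, and ⟨u, n_k⟩ > 0. -/
/-- The point of the unit circle at angle `θ`. -/
noncomputable def circleVec (θ : ℝ) : EuclideanSpace ℝ (Fin 2) :=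
  (WithLp.equiv 2 (Fin 2 → ℝ)).symm ![Real.cos θ, Real.sin θ]

open Real

private lemma span2 {α β : ℝ} (h : Real.sin (β - α) ≠ 0) (x : EuclideanSpace ℝ (Fin 2)) :
    x = ((x 0 * Real.sin β - x 1 * Real.cos β) / Real.sin (β - α)) • circleVec α
      + ((x 1 * Real.cos α - x 0 * Real.sin α) / Real.sin (β - α)) • circleVec β := by
  rw [Real.sin_sub] at h ⊢
  ext i
  fin_cases i <;>
    simp only [circleVec, PiLp.add_apply, PiLp.smul_apply, WithLp.equiv_symm_apply, PiLp.toLp_apply,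
      Fin.zero_eta, Fin.mk_one, Matrix.cons_val_zero, Matrix.cons_val_one, Matrix.head_cons, smul_eq_mul] <;>
    field_simp <;> ring

private lemma zero3 {α β γ : ℝ} (h : Real.sin (β - α) ≠ 0) :
    (Real.sin (γ - β) / Real.sin (β - α)) • circleVec α
      + (Real.sin (α - γ) / Real.sin (β - α)) • circleVec β + circleVec γ = 0 := by
  ext i
  fin_cases i <;>
    simp only [circleVec, PiLp.add_apply, PiLp.smul_apply, PiLp.zero_apply,
      WithLp.equiv_symm_apply, PiLp.toLp_apply, Fin.zero_eta, Fin.mk_one, Matrix.cons_val_zero, Matrix.cons_val_one,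
      Matrix.head_cons, smul_eq_mul] <;>
    field_simp <;>
    simp only [Real.sin_sub] <;> ring

private lemma posSpan_ccw {α β γ : ℝ} (h1 : 0 < Real.sin (β - α))
    (h2 : 0 < Real.sin (γ - β)) (h3 : 0 < Real.sin (α - γ)) :
    PosSpanE2 (circleVec α) (circleVec β) (circleVec γ) := by
  intro x
  set a' : ℝ := (x 0 * Real.sin β - x 1 * Real.cos β) / Real.sin (β - α) with ha'
  set b' : ℝ := (x 1 * Real.cos α - x 0 * Real.sin α) / Real.sin (β - α) with hb'
  set p : ℝ := Real.sin (γ - β) / Real.sin (β - α) with hp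
  set q : ℝ := Real.sin (α - γ) / Real.sin (β - α) with hq
  have hp0 : 0 < p := div_pos h2 h1
  have hq0 : 0 < q := div_pos h3 h1
  set t : ℝ := max (max (-a' / p) (-b' / q)) 0 with ht
  have ht0 : 0 ≤ t := le_max_right _ _
  have hta : 0 ≤ a' + t * p := by
    have h : -a' / p ≤ t := le_trans (le_max_left _ _) (le_max_left _ _)
    have := (div_le_iff₀ hp0).mp h
    linarith
  have htb : 0 ≤ b' + t * q := by
    have h : -b' / q ≤ t := le_trans (le_max_right _ _) (le_max_left _ _)
    have := (div_le_iff₀ hq0).mp h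
    linarith
  refine ⟨a' + t * p, b' + t * q, t, hta, htb, ht0, ?_⟩
  have key : (a' + t*p) • circleVec α + (b' + t*q) • circleVec β + t • circleVec γ
      = (a' • circleVec α + b' • circleVec β)
        + t • ((p • circleVec α + q • circleVec β) + circleVec γ) := by
    simp only [add_smul, mul_smul, smul_add]; abel
  rw [key, zero3 (ne_of_gt h1), smul_zero, add_zero]
  exact span2 (ne_of_gt h1) x

private lemma posSpan_swap {v1 v2 v3 : EuclideanSpace ℝ (Fin 2)}
    (h : PosSpanE2 v1 v2 v3) : PosSpanE2 v1 v3 v2 := by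
  intro x
  obtain ⟨a, b, c, ha, hb, hc, hx⟩ := h x
  exact ⟨a, c, b, ha, hc, hb, by rw [hx]; abel⟩

private lemma posSpan_cyc {v1 v2 v3 : EuclideanSpace ℝ (Fin 2)}
    (h : PosSpanE2 v1 v2 v3) : PosSpanE2 v2 v3 v1 := by
  intro x
  obtain ⟨a, b, c, ha, hb, hc, hx⟩ := h x
  exact ⟨b, c, a, hb, hc, ha, by rw [hx]; abel⟩

private lemma angle_antipode {a b : ℝ} (h : circleVec b = - circleVec a)
    (h1 : a < b) (h2 : b < a + 2 * π) : b = a + π := by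
  have hπ := Real.pi_pos
  have hc : Real.cos b = - Real.cos a := by
    have := congrArg (fun v => v 0) h
    simpa [circleVec] using this
  have hs : Real.sin b = - Real.sin a := by
    have := congrArg (fun v => v 1) h
    simpa [circleVec] using this
  have hcos : Real.cos (b - a - π) = 1 := by
    rw [Real.cos_sub_pi, Real.cos_sub, hc, hs]
    nlinarith [Real.sin_sq_add_cos_sq a]
  obtain ⟨k, hk⟩ := (Real.cos_eq_one_iff _).mp hcos
  have hk1 : (k : ℝ) < 1 := by nlinarith
  have hk2 : (-1 : ℝ) < (k : ℝ) := by nlinarith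
  have hk0 : k = 0 := by
    have h1' : k < 1 := by exact_mod_cast hk1
    have h2' : (-1 : ℤ) < k := by exact_mod_cast hk2
    omega
  rw [hk0] at hk
  push_cast at hk
  linarith

private lemma sin_pos' {x : ℝ} (h1 : 0 < x) (h2 : x < π) : 0 < Real.sin x :=
  Real.sin_pos_of_pos_of_lt_pi h1 h2

private lemma sin_pos_wrap {x : ℝ} (h1 : -(2*π) < x) (h2 : x < -π) : 0 < Real.sin x := by
  have h : Real.sin x = Real.sin (x + 2*π) := (Real.sin_add_two_pi x).symm
  rw [h]
  exact Real.sin_pos_of_pos_of_lt_pi (by linarith) (by linarith [Real.pi_pos])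

set_option maxHeartbeats 2000000 in
/-- A `σ₅`-pattern satisfies the pinning-pattern direction condition: for every
`u ∈ S¹` there are `i < j < k` with `{nᵢ,nⱼ,n_k}` positively spanning `ℝ²`,
`⟨u,nᵢ⟩ < 0` and `⟨u,n_k⟩ > 0`. -/
theorem stmt_19 (n : Fin 5 → EuclideanSpace ℝ (Fin 2)) (θ : Fin 10 → ℝ)
    (hmono : StrictMono θ) (hrange : θ 9 < θ 0 + 2 * Real.pi)
    (horder : (![n 0, -n 2, n 4, n 1, -n 3, -n 0, n 2, -n 4, -n 1, n 3] :
        Fin 10 → EuclideanSpace ℝ (Fin 2)) = fun i => circleVec (θ i)) :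
    ∀ u : EuclideanSpace ℝ (Fin 2), ‖u‖ = 1 →
      ∃ i j k : Fin 5, i < j ∧ j < k ∧ PosSpanE2 (n i) (n j) (n k) ∧
        (inner ℝ u (n i) : ℝ) < 0 ∧ 0 < (inner ℝ u (n k) : ℝ) := by
  intro u hu
  have hπ := Real.pi_pos
  -- extract the ten equations
  have e0 : n 0 = circleVec (θ 0) := by simpa using congrFun horder 0
  have e1 : -n 2 = circleVec (θ 1) := by simpa using congrFun horder 1
  have e2 : n 4 = circleVec (θ 2) := by simpa using congrFun horder 2
  have e3 : n 1 = circleVec (θ 3) := by simpa using congrFun horder 3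
  have e4 : -n 3 = circleVec (θ 4) := by simpa using congrFun horder 4
  have e5 : -n 0 = circleVec (θ 5) := by simpa using congrFun horder 5
  have e6 : n 2 = circleVec (θ 6) := by simpa using congrFun horder 6
  have e7 : -n 4 = circleVec (θ 7) := by simpa using congrFun horder 7
  have e8 : -n 1 = circleVec (θ 8) := by simpa using congrFun horder 8
  have e9 : n 3 = circleVec (θ 9) := by simpa using congrFun horder 9
  -- monotonicity facts
  have m01 : θ 0 < θ 1 := hmono (by decide)
  have m12 : θ 1 < θ 2 := hmono (by decide)
  have m23 : θ 2 < θ 3 := hmono (by decide)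
  have m34 : θ 3 < θ 4 := hmono (by decide)
  have m45 : θ 4 < θ 5 := hmono (by decide)
  have m05 : θ 0 < θ 5 := hmono (by decide)
  have m16 : θ 1 < θ 6 := hmono (by decide)
  have m27 : θ 2 < θ 7 := hmono (by decide)
  have m38 : θ 3 < θ 8 := hmono (by decide)
  have m49 : θ 4 < θ 9 := hmono (by decide)
  have m59 : θ 5 < θ 9 := hmono (by decide)
  have m69 : θ 6 < θ 9 := hmono (by decide)
  have m79 : θ 7 < θ 9 := hmono (by decide)
  have m89 : θ 8 < θ 9 := hmono (by decide)
  -- antipode relations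
  have r5 : θ 5 = θ 0 + π := by
    refine angle_antipode ?_ m05 (by linarith)
    rw [← e5, e0]
  have r6 : θ 6 = θ 1 + π := by
    refine angle_antipode ?_ m16 (by linarith)
    rw [← e6, ← e1, neg_neg]
  have r7 : θ 7 = θ 2 + π := by
    refine angle_antipode ?_ m27 (by linarith)
    rw [← e7, e2]
  have r8 : θ 8 = θ 3 + π := by
    refine angle_antipode ?_ m38 (by linarith)
    rw [← e8, e3]
  have r9 : θ 9 = θ 4 + π := by
    refine angle_antipode ?_ m49 (by linarith)
    rw [← e9, ← e4, neg_neg]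
  -- key bound
  have b4 : θ 4 < θ 0 + π := by rw [← r5]; exact m45
  -- positive spanning of the four triples
  have P012 : PosSpanE2 (n 0) (n 1) (n 2) := by
    rw [e0, e3, e6, r6]
    exact posSpan_ccw (sin_pos' (by linarith) (by linarith))
      (sin_pos' (by linarith) (by linarith))
      (sin_pos_wrap (by linarith) (by linarith))
  have P024 : PosSpanE2 (n 0) (n 2) (n 4) := by
    apply posSpan_swap
    rw [e0, e2, e6, r6]
    exact posSpan_ccw (sin_pos' (by linarith) (by linarith))
      (sin_pos' (by linarith) (by linarith))
      (sin_pos_wrap (by linarith) (by linarith))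
  have P123 : PosSpanE2 (n 1) (n 2) (n 3) := by
    rw [e3, e6, e9, r6, r9]
    exact posSpan_ccw (sin_pos' (by linarith) (by linarith))
      (sin_pos' (by linarith) (by linarith))
      (sin_pos_wrap (by linarith) (by linarith))
  have P234 : PosSpanE2 (n 2) (n 3) (n 4) := by
    apply posSpan_cyc
    rw [e2, e6, e9, r6, r9]
    exact posSpan_ccw (sin_pos' (by linarith) (by linarith))
      (sin_pos' (by linarith) (by linarith))
      (sin_pos_wrap (by linarith) (by linarith))
  -- obtain the angle of u
  obtain ⟨φ0, hc0, hs0⟩ : ∃ φ0, Real.cos φ0 = u 0 ∧ Real.sin φ0 = u 1 := by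
    have h1 : u 0 ^ 2 + u 1 ^ 2 = 1 := by
      have h := hu
      rw [EuclideanSpace.norm_eq] at h
      have h2 : Real.sqrt (∑ i : Fin 2, u i ^ 2) = 1 := by
        convert h using 3
        simp [sq_abs]
      rw [Fin.sum_univ_two] at h2
      nlinarith [Real.sq_sqrt (by positivity : (0:ℝ) ≤ u 0 ^ 2 + u 1 ^ 2),
        h2]
    set z : ℂ := ⟨u 0, u 1⟩ with hz
    have habs : ‖z‖ = 1 := by
      simp only [Complex.norm_def, Complex.normSq_mk, hz]
      rw [show u 0 * u 0 + u 1 * u 1 = 1 by nlinarith]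
      exact Real.sqrt_one
    have hz0 : z ≠ 0 := by
      intro h; rw [h] at habs; simp at habs
    refine ⟨z.arg, ?_, ?_⟩
    · rw [Complex.cos_arg hz0, habs]; simp [hz]
    · rw [Complex.sin_arg, habs]; simp [hz]
  -- shift the angle into the fundamental window
  set φ : ℝ := toIocMod Real.two_pi_pos (θ 0 + π/2) φ0 with hφdef
  have hφmem := toIocMod_mem_Ioc Real.two_pi_pos (θ 0 + π/2) φ0
  have hφ1 : θ 0 + π/2 < φ := hφmem.1
  have hφ2 : φ ≤ θ 0 + π/2 + 2*π := hφmem.2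
  have hφeq : φ = φ0 + ((-(toIocDiv Real.two_pi_pos (θ 0 + π/2) φ0) : ℤ) : ℝ) * (2*π) := by
    rw [hφdef, toIocMod, zsmul_eq_mul]
    push_cast
    ring
  have hcφ : Real.cos φ = u 0 := by
    rw [hφeq, Real.cos_add_int_mul_two_pi, hc0]
  have hsφ : Real.sin φ = u 1 := by
    rw [hφeq, Real.sin_add_int_mul_two_pi, hs0]
  have hinner : ∀ ψ : ℝ, (inner ℝ u (circleVec ψ) : ℝ) = Real.cos (φ - ψ) := by
    intro ψ
    have : (inner ℝ u (circleVec ψ) : ℝ) = u 0 * Real.cos ψ + u 1 * Real.sin ψ := by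
      simp [circleVec, PiLp.inner_apply, RCLike.inner_apply, Fin.sum_univ_two]
      ring
    rw [this, Real.cos_sub, hcφ, hsφ]
  -- case analysis on φ
  rcases lt_or_ge φ (θ 2 + π/2) with c1 | c1
  · -- triple (0,2,4)
    refine ⟨0, 2, 4, by decide, by decide, P024, ?_, ?_⟩
    · rw [e0, hinner]
      exact Real.cos_neg_of_pi_div_two_lt_of_lt (by linarith) (by linarith)
    · rw [e2, hinner]
      exact Real.cos_pos_of_mem_Ioo ⟨by linarith, by linarith⟩
  rcases lt_or_ge φ (θ 0 + 3*π/2) with c2 | c2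
  · -- triple (0,1,2)
    refine ⟨0, 1, 2, by decide, by decide, P012, ?_, ?_⟩
    · rw [e0, hinner]
      exact Real.cos_neg_of_pi_div_two_lt_of_lt (by linarith) (by linarith)
    · rw [e6, r6, hinner]
      exact Real.cos_pos_of_mem_Ioo ⟨by linarith, by linarith⟩
  rcases lt_or_ge φ (θ 3 + 3*π/2) with c3 | c3
  · -- triple (1,2,3)
    refine ⟨1, 2, 3, by decide, by decide, P123, ?_, ?_⟩
    · rw [e3, hinner]
      exact Real.cos_neg_of_pi_div_two_lt_of_lt (by linarith) (by linarith)
    · rw [e9, r9, hinner]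
      exact Real.cos_pos_of_mem_Ioo ⟨by linarith, by linarith⟩
  · -- triple (2,3,4)
    refine ⟨2, 3, 4, by decide, by decide, P234, ?_, ?_⟩
    · rw [e6, r6, hinner]
      exact Real.cos_neg_of_pi_div_two_lt_of_lt (by linarith) (by linarith)
    · rw [e2, hinner]
      have h : Real.cos (φ - θ 2) = Real.cos (φ - θ 2 - 2*π) :=
        (Real.cos_sub_two_pi _).symm
      rw [h]
      exact Real.cos_pos_of_mem_Ioo ⟨by linarith, by linarith⟩
end
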